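/- arXiv:1204.1196 — 4 statements merged into one kernel-verified Lean document; each statement's English description precedes it below -/
import Mathlib

section
/- Let φ ∈ MHL(□,↓,@) be a monotone hybrid formula, let g be a partial assignment defined on all state variables free in φ, and let n_g = 1 + max of the values of g. Then for every i ∈ ℕ: g,i ⊨ □φ over (ℕ,<) if and only if g,n_g ⊨ φ. -/
/-- Formulas of monotone hybrid logic MHL(□,↓,@) over state variables. -/
inductive HForm : Type
  | svar : ℕ → HForm
  | top : HForm
  | bot : HForm
  | conj : HForm → HForm → HForm
  | disj : HForm → HForm → HForm
  | box : HForm → HForm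
  | bind : ℕ → HForm → HForm
  | at_ : ℕ → HForm → HForm

/-- Satisfaction over the frame (ℕ,<) with assignment g. -/
def sat (g : ℕ → ℕ) (k : ℕ) : HForm → Prop
  | .svar x => g x = k
  | .top => True
  | .bot => False
  | .conj a b => sat g k a ∧ sat g k b
  | .disj a b => sat g k a ∨ sat g k b
  | .box a => ∀ k' > k, sat g k' a
  | .bind x a => sat (Function.update g x k) k a
  | .at_ x a => sat g (g x) a

/-- The state variables occurring free in a formula (subscripts of @ included). -/
def free : HForm → Finset ℕ
  | .svar x => {x}
  | .top => ∅
  | .bot => ∅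
  | .conj a b => free a ∪ free b
  | .disj a b => free a ∪ free b
  | .box a => free a
  | .bind x a => (free a).erase x
  | .at_ x a => insert x (free a)

/-
Without negation, satisfaction is preserved along any map `h : ℕ → ℕ` of the frame that commutes
with the assignments, as long as the points visited so far lie below some bound `N`. Order is
never needed on the target side: to verify `□ψ` at a target point `k'`, take the source point `N`,
which exceeds everything seen so far, and redefine `h` there to be `k'`.

With `h` the identity redefined at a single point `m` above all values of `g`, this shows that
`φ` at `m` implies `φ` at every point. Hence all points above the values of `g` agree on `φ`,
and `□φ` at any `i` amounts to `φ` at such a point, e.g. at `n_g`.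
-/

theorem sat_of_sat_comp (φ : HForm) :
    ∀ {g g' h : ℕ → ℕ} {j N : ℕ}, (∀ y ∈ free φ, g y < N ∧ g' y = h (g y)) → j < N →
      sat g j φ → sat g' (h j) φ := by
  induction φ with
  | svar x =>
    intro g g' h j N hg _ hsat
    obtain ⟨-, hx⟩ := hg x (Finset.mem_singleton_self x)
    simp only [sat] at hsat ⊢
    rw [hx, hsat]
  | top => exact fun _ _ _ => trivial
  | bot => exact fun _ _ hsat => hsat.elim
  | conj a b iha ihb =>
    intro g g' h j N hg hj hsat
    exact ⟨iha (fun y hy => hg y (Finset.mem_union_left _ hy)) hj hsat.1,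
      ihb (fun y hy => hg y (Finset.mem_union_right _ hy)) hj hsat.2⟩
  | disj a b iha ihb =>
    intro g g' h j N hg hj hsat
    exact hsat.imp (iha (fun y hy => hg y (Finset.mem_union_left _ hy)) hj)
      (ihb (fun y hy => hg y (Finset.mem_union_right _ hy)) hj)
  | box a ih =>
    intro g g' h j N hg hj hsat k' _
    have hg' : ∀ y ∈ free a, g y < N + 1 ∧ g' y = Function.update h N k' (g y) := by
      intro y hy
      obtain ⟨hlt, heq⟩ := hg y hy
      exact ⟨by omega, by rw [Function.update_of_ne hlt.ne, heq]⟩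
    simpa using ih hg' N.lt_succ_self (hsat N hj)
  | bind x a ih =>
    intro g g' h j N hg hj hsat
    refine ih (fun y hy => ?_) hj hsat
    by_cases hyx : y = x
    · subst hyx
      simpa using hj
    · simp only [Function.update_of_ne hyx]
      exact hg y (Finset.mem_erase.mpr ⟨hyx, hy⟩)
  | at_ x a ih =>
    intro g g' h j N hg _ hsat
    obtain ⟨hxN, hx⟩ := hg x (Finset.mem_insert_self x _)
    simp only [sat, hx]
    exact ih (fun y hy => hg y (Finset.mem_insert_of_mem hy)) hxN hsat

theorem sat_of_sat_of_forall_free_lt {φ : HForm} {g : ℕ → ℕ} {m : ℕ}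
    (hg : ∀ y ∈ free φ, g y < m) (hsat : sat g m φ) (k : ℕ) : sat g k φ := by
  have hg' : ∀ y ∈ free φ, g y < m + 1 ∧ g y = Function.update id m k (g y) := fun y hy =>
    ⟨(hg y hy).trans m.lt_succ_self, by rw [Function.update_of_ne (hg y hy).ne, id]⟩
  simpa using sat_of_sat_comp φ hg' m.lt_succ_self hsat

/-- Lemma: for a partial assignment g defined on a finite set V of variables containing
all free variables of φ, and n_g = max{g(x) : x ∈ V} + 1, we have
g,i ⊨ □φ iff g,n_g ⊨ φ over (ℕ,<). -/
theorem stmt5 (φ : HForm) (g : ℕ → ℕ) (V : Finset ℕ) (hV : free φ ⊆ V) (i : ℕ) :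
    sat g i (.box φ) ↔ sat g (V.sup g + 1) φ := by
  have hlt : ∀ y ∈ free φ, g y < V.sup g + 1 := fun y hy =>
    Nat.lt_succ_of_le (Finset.le_sup (hV hy))
  constructor
  · intro hbox
    set P := max (V.sup g + 1) (i + 1)
    have hP : sat g P φ := hbox P (by omega)
    exact sat_of_sat_of_forall_free_lt (fun y hy => (hlt y hy).trans_le (le_max_left _ _)) hP _
  · exact fun hsat k _ => sat_of_sat_of_forall_free_lt hlt hsat k
end

section
/- Let φ ∈ MHL(□,↓,@) be a monotone hybrid formula, let i,j ∈ ℕ, and let g,h be partial assignments defined on all state variables free in φ such that (1) every free variable of φ mapped to i by g is mapped to j by h, and (2) whenever g maps two free variables of φ to the same value, so does h. Then g,i ⊨ φ implies h,j ⊨ φ over the frame (ℕ,<). -/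
/-!
Conditions (1) and (2) say exactly that `h` factors through `g` on the free variables by a map
`f` with `f i = j`. Satisfaction is transported along any such factorisation, by induction on
the formula: `↓x` extends both assignments compatibly, `@x` moves to `g x` and `h x = f (g x)`,
and for `□`, given a successor `k > f i` on the `h` side, redefine `f` at a point beyond `i` and
beyond every value of `g` on the free variables so that it is sent to `k`.
-/

theorem exists_factor_on_of_fibers {S : Set ℕ} {g h : ℕ → ℕ} {i j : ℕ}
    (h1 : ∀ x ∈ S, g x = i → h x = j) (h2 : ∀ a ∈ S, ∀ b ∈ S, g a = g b → h a = h b) :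
    ∃ f : ℕ → ℕ, f i = j ∧ ∀ x ∈ S, h x = f (g x) := by
  classical
  refine ⟨fun n => if hn : ∃ x ∈ S, g x = n then h hn.choose else j, ?_, fun x hx => ?_⟩
  · dsimp only
    split_ifs with hi
    · exact h1 _ hi.choose_spec.1 hi.choose_spec.2
    · rfl
  · have hgx : ∃ y ∈ S, g y = g x := ⟨x, hx, rfl⟩
    dsimp only
    rw [dif_pos hgx]
    exact (h2 _ hgx.choose_spec.1 x hx hgx.choose_spec.2).symm

theorem sat_map_of_factor {φ : HForm} {g h f : ℕ → ℕ} {i : ℕ}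
    (hf : ∀ x ∈ free φ, h x = f (g x)) (hsat : sat g i φ) : sat h (f i) φ := by
  induction φ generalizing g h f i with
  | svar x => exact (hf x (Finset.mem_singleton_self x)).trans (congrArg f hsat)
  | top => trivial
  | bot => exact hsat
  | conj a b iha ihb =>
    exact ⟨iha (fun x hx => hf x (Finset.mem_union_left _ hx)) hsat.1,
      ihb (fun x hx => hf x (Finset.mem_union_right _ hx)) hsat.2⟩
  | disj a b iha ihb =>
    exact hsat.imp (iha fun x hx => hf x (Finset.mem_union_left _ hx))
      (ihb fun x hx => hf x (Finset.mem_union_right _ hx))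
  | box a ih =>
    intro k hk
    let n := i + (free a).sup g + 1
    have hg_lt : ∀ x ∈ free a, g x < n := fun x hx => by
      have := Finset.le_sup (f := g) hx
      omega
    have hf' : ∀ x ∈ free a, h x = Function.update f n k (g x) := fun x hx => by
      rw [Function.update_of_ne (hg_lt x hx).ne]
      exact hf x hx
    simpa only [Function.update_self] using ih hf' (hsat n (by omega))
  | bind x a ih =>
    refine ih (fun y hy => ?_) hsat
    by_cases hyx : y = x
    · subst hyx
      simp only [Function.update_self]
    · simp only [Function.update_of_ne hyx]
      exact hf y (Finset.mem_erase.mpr ⟨hyx, hy⟩)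
  | at_ x a ih =>
    have hx := hf x (Finset.mem_insert_self x _)
    simp only [sat, hx]
    exact ih (fun y hy => hf y (Finset.mem_insert_of_mem hy)) hsat

/-- If (1) every free variable of φ mapped to i by g is mapped to j by h, and
(2) whenever g identifies two free variables of φ so does h, then g,i ⊨ φ implies
h,j ⊨ φ over (ℕ,<). -/
theorem stmt6 (φ : HForm) (i j : ℕ) (g h : ℕ → ℕ)
    (h1 : ∀ x ∈ free φ, g x = i → h x = j)
    (h2 : ∀ a ∈ free φ, ∀ b ∈ free φ, g a = g b → h a = h b)
    (hsat : sat g i φ) : sat h j φ := by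
  obtain ⟨f, rfl, hf⟩ := exists_factor_on_of_fibers h1 h2
  exact sat_map_of_factor hf hsat
end

section
/- Let φ ∈ MHL(□,↓,@), let g be a partial assignment defined on all free variables of φ, and let i ∈ ℕ be such that no free variable of φ is mapped to i by g. Then over (ℕ,<), g,i ⊨ φ implies g,j ⊨ φ for every j ∈ ℕ. -/
/-!
Truth of a monotone formula is preserved by an arbitrary relabelling `f` of the points,
as long as the free variables are relabelled along with the evaluation point. The only
case needing care is `□`: a witness for `□` at `f k` is reached by first evaluating at a
point `m > k` that no free variable names, and then relabelling `m` to the desired point.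
Relabelling `i` to `j` and fixing everything else gives the theorem, because no free
variable is mapped to `i`.
-/

theorem sat_of_forall_free_eq_comp {φ : HForm} {g g' : ℕ → ℕ} {k : ℕ} (f : ℕ → ℕ)
    (hg : ∀ x ∈ free φ, g' x = f (g x)) (hφ : sat g k φ) : sat g' (f k) φ := by
  induction φ generalizing g g' k f with
  | svar x =>
    simp only [sat, free, Finset.mem_singleton, forall_eq] at hφ hg ⊢
    rw [hg, hφ]
  | top => trivial
  | bot => exact hφ.elim
  | conj a b iha ihb =>
    exact ⟨iha f (fun x hx => hg x (Finset.mem_union_left _ hx)) hφ.1,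
      ihb f (fun x hx => hg x (Finset.mem_union_right _ hx)) hφ.2⟩
  | disj a b iha ihb =>
    exact hφ.imp (iha f fun x hx => hg x (Finset.mem_union_left _ hx))
      (ihb f fun x hx => hg x (Finset.mem_union_right _ hx))
  | box a ih =>
    intro m' _
    set m := (free a).sup g + k + 1
    have hm_fresh : ∀ x ∈ free a, g x ≠ m := fun x hx => by
      have := Finset.le_sup (f := g) hx
      omega
    have hgm : ∀ x ∈ free a, g' x = Function.update f m m' (g x) := fun x hx => by
      rw [Function.update_of_ne (hm_fresh x hx)]
      exact hg x hx
    simpa using ih (Function.update f m m') hgm (hφ m (by omega))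
  | bind x a ih =>
    refine ih f (fun y hy => ?_) hφ
    by_cases hyx : y = x
    · subst hyx
      simp only [Function.update_self]
    · simp only [Function.update_of_ne hyx]
      exact hg y (Finset.mem_erase.mpr ⟨hyx, hy⟩)
  | at_ x a ih =>
    rw [sat, hg x (Finset.mem_insert_self _ _)]
    exact ih f (fun y hy => hg y (Finset.mem_insert_of_mem hy)) hφ

/-- If no free variable of φ is mapped to i by g, then g,i ⊨ φ implies g,j ⊨ φ for
every j, over (ℕ,<). -/
theorem stmt7 (φ : HForm) (g : ℕ → ℕ) (i : ℕ)
    (hi : ∀ x ∈ free φ, g x ≠ i)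
    (hsat : sat g i φ) : ∀ j : ℕ, sat g j φ := by
  intro j
  have hfix : ∀ x ∈ free φ, g x = Function.update id i j (g x) := fun x hx => by
    rw [Function.update_of_ne (hi x hx), id]
  simpa using sat_of_forall_free_eq_comp (Function.update id i j) hfix hsat
end

section
/- A monotone hybrid formula φ ∈ MHL(□,↓,@) is satisfiable over the frame (ℕ,<) (there exist a partial assignment g for φ and i ∈ ℕ with g,i ⊨ φ) if and only if g₀^φ, 0 ⊨ φ, where g₀^φ is the canonical assignment mapping every variable free in φ to 0. -/
/-! Satisfaction of a negation-free formula is preserved when the assignment and the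
evaluation point are pushed forward along an arbitrary map `f : ℕ → ℕ` of worlds. For `□`, a
demanded point `k' > f i` is reached by redirecting `f` at a point above `i` and above the
finitely many values of free variables, where `f` may be changed freely. Taking `f` constant
`0` collapses any model onto the canonical one. -/

theorem sat_congr {g g' : ℕ → ℕ} {i : ℕ} {φ : HForm} (h : ∀ x ∈ free φ, g x = g' x) :
    sat g i φ ↔ sat g' i φ := by
  induction φ generalizing g g' i with
  | svar x => simp only [sat, h x (Finset.mem_singleton_self x)]
  | top | bot => rfl
  | conj a b iha ihb | disj a b iha ihb =>
    simp only [free, Finset.mem_union] at h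
    simp only [sat, iha fun x hx => h x (.inl hx), ihb fun x hx => h x (.inr hx)]
  | box a ih =>
    simp only [sat, ih h]
  | bind x a ih =>
    refine ih fun y hy => ?_
    by_cases hyx : y = x
    · simp only [hyx, Function.update_self]
    · simp only [Function.update_of_ne hyx, h y (Finset.mem_erase.2 ⟨hyx, hy⟩)]
  | at_ x a ih =>
    simp only [free, Finset.mem_insert] at h
    simp only [sat, h x (.inl rfl), ih fun y hy => h y (.inr hy)]

theorem sat_comp {g : ℕ → ℕ} {i : ℕ} {φ : HForm} (f : ℕ → ℕ) (h : sat g i φ) :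
    sat (f ∘ g) (f i) φ := by
  induction φ generalizing f g i with
  | svar x => exact congrArg f h
  | top | bot => exact h
  | conj a b iha ihb => exact ⟨iha f h.1, ihb f h.2⟩
  | disj a b iha ihb => exact h.imp (iha f) (ihb f)
  | box a ih =>
    intro k' _
    set m := max i ((free a).sup g) + 1
    have hm_fresh : ∀ x ∈ free a, g x ≠ m := fun x hx => by
      have := Finset.le_sup (f := g) hx
      omega
    have key := ih (Function.update f m k') (h m (by omega))
    rw [Function.update_self] at key
    refine (sat_congr fun x hx => ?_).1 key
    simp only [Function.comp_apply, Function.update_of_ne (hm_fresh x hx)]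
  | bind x a ih =>
    have key := ih f h
    rwa [Function.comp_update] at key
  | at_ x a ih => exact ih f h

/-- φ ∈ MHL(□,↓,@) is satisfiable over (ℕ,<) iff g₀^φ,0 ⊨ φ, where the canonical
assignment g₀^φ maps every (free) variable to 0. -/
theorem stmt8 (φ : HForm) :
    (∃ (g : ℕ → ℕ) (i : ℕ), sat g i φ) ↔ sat (fun _ => 0) 0 φ :=
  ⟨fun ⟨_, _, h⟩ => sat_comp (fun _ => 0) h, fun h => ⟨_, _, h⟩⟩
end
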